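/- arXiv:2508.05839 — 3 statements merged into one kernel-verified Lean document; each statement's English description precedes it below -/
import Mathlib

section
/- Suppose $j^1_1 \neq j^1_2$, $j^2_1 \neq j^2_2$, $j^3_1 \neq j^3_2$ are pairs of distinct elements of $\mathbb{F}_3$, and $(t_1,t_2,t_3) \in \{1,2\}^3$ satisfies $j^1_{t_1} + j^2_{t_2} + j^3_{t_3} = 0$. Then there exists $(t'_1,t'_2,t'_3) \in \{1,2\}^3$ such that either $t'_u \leq t_u$ for all $u$ and $j^1_{t'_1} + j^2_{t'_2} + j^3_{t'_3} = 1$, or $t_u \leq t'_u$ for all $u$ and $j^1_{t'_1} + j^2_{t'_2} + j^3_{t'_3} = 2$. -/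
/-!
Write `δ u = j u 1 - j u 0`, which is nonzero. Lowering the coordinates of `t` in a set
`r ⊆ {t = 1}` changes the sum by `-∑_{u ∈ r} δ u`, raising those in `r ⊆ {t = 0}` changes it by
`∑_{u ∈ r} δ u`, so in both cases it suffices to find such an `r` with `∑_{u ∈ r} δ u = 2`.
One of `{t = 1}`, `{t = 0}` has two elements, and among nonzero elements of `𝔽₃` either some
singleton already sums to `2` or all of them equal `1`, and then any two of them sum to `2`.
-/

open Finset

lemma ZMod.exists_subset_sum_eq_two {ι : Type*} (s : Finset ι) (δ : ι → ZMod 3)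
    (hδ : ∀ i ∈ s, δ i ≠ 0) (hs : 2 ≤ #s) : ∃ r ⊆ s, ∑ i ∈ r, δ i = 2 := by
  by_cases htwo : ∃ i ∈ s, δ i = 2
  · obtain ⟨i, hi, hi2⟩ := htwo
    exact ⟨{i}, singleton_subset_iff.mpr hi, by simpa using hi2⟩
  · have hone : ∀ i ∈ s, δ i = 1 := fun i hi => by
      have := hδ i hi
      have := fun h => htwo ⟨i, hi, h⟩
      generalize δ i = x at *
      decide +revert
    obtain ⟨r, hrs, hr⟩ := exists_subset_card_eq hs
    refine ⟨r, hrs, ?_⟩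
    rw [sum_congr rfl fun i hi => hone i (hrs hi), sum_const, hr]
    rfl

lemma Finset.sum_ite_mem_eq_add_sum_sub {ι α M : Type*} [Fintype ι] [DecidableEq ι]
    [AddCommGroup M] (f : ι → α → M) (t : ι → α) (r : Finset ι) (a : α) :
    ∑ u, f u (if u ∈ r then a else t u) = ∑ u, f u (t u) + ∑ u ∈ r, (f u a - f u (t u)) := by
  have hpt : ∀ u, f u (if u ∈ r then a else t u)
      = f u (t u) + if u ∈ r then f u a - f u (t u) else 0 := fun u => by
    split_ifs <;> simp
  simp only [hpt, sum_add_distrib, sum_ite_mem, univ_inter]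

theorem exists_le_sum_add_one_or_ge_sum_add_two {ι : Type*} [Fintype ι] [DecidableEq ι]
    (hι : 3 ≤ Fintype.card ι) (j : ι → Fin 2 → ZMod 3) (hj : ∀ u, j u 0 ≠ j u 1)
    (t : ι → Fin 2) :
    ∃ t' : ι → Fin 2,
      (t' ≤ t ∧ ∑ u, j u (t' u) = ∑ u, j u (t u) + 1) ∨
      (t ≤ t' ∧ ∑ u, j u (t' u) = ∑ u, j u (t u) + 2) := by
  set δ : ι → ZMod 3 := fun u => j u 1 - j u 0
  have hδ : ∀ u, δ u ≠ 0 := fun u => sub_ne_zero.mpr (hj u).symm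
  have hcard : #(univ.filter (t · = 1)) + #(univ.filter (t · = 0)) = Fintype.card ι := by
    rw [← card_univ, ← card_filter_add_card_filter_not (s := univ) (t · = 1)]
    congr 2
    exact filter_congr fun u _ => by omega
  by_cases hones : 2 ≤ #(univ.filter (t · = 1))
  · obtain ⟨r, hr, hrsum⟩ := ZMod.exists_subset_sum_eq_two _ δ (fun u _ => hδ u) hones
    refine ⟨fun u => if u ∈ r then 0 else t u, Or.inl ⟨fun u => ?_, ?_⟩⟩
    · dsimp only
      split_ifs
      exacts [Fin.zero_le _, le_rfl]
    · have hlower : ∀ u ∈ r, j u 0 - j u (t u) = -δ u := fun u hu => by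
        simp [δ, (mem_filter.mp (hr hu)).2]
      rw [sum_ite_mem_eq_add_sum_sub, sum_congr rfl hlower, sum_neg_distrib, hrsum,
        show (-2 : ZMod 3) = 1 by decide]
  · have hzeros : 2 ≤ #(univ.filter (t · = 0)) := by omega
    obtain ⟨r, hr, hrsum⟩ := ZMod.exists_subset_sum_eq_two _ δ (fun u _ => hδ u) hzeros
    refine ⟨fun u => if u ∈ r then 1 else t u, Or.inr ⟨fun u => ?_, ?_⟩⟩
    · dsimp only
      split_ifs
      exacts [Fin.le_last _, le_rfl]
    · have hraise : ∀ u ∈ r, j u 1 - j u (t u) = δ u := fun u hu => by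
        simp [δ, (mem_filter.mp (hr hu)).2]
      rw [sum_ite_mem_eq_add_sum_sub, sum_congr rfl hraise, hrsum]

/-- Given pairs of distinct elements `j u 0 ≠ j u 1` of `𝔽₃` for `u ∈ {1,2,3}` and
`t : Fin 3 → Fin 2` with `∑ u, j u (t u) = 0`, there is `t'` with either `t' ≤ t`
coordinatewise and sum `1`, or `t ≤ t'` coordinatewise and sum `2`. -/
theorem stmt_5 (j : Fin 3 → Fin 2 → ZMod 3) (hj : ∀ u, j u 0 ≠ j u 1)
    (t : Fin 3 → Fin 2) (ht : j 0 (t 0) + j 1 (t 1) + j 2 (t 2) = 0) :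
    ∃ t' : Fin 3 → Fin 2,
      ((∀ u, t' u ≤ t u) ∧ j 0 (t' 0) + j 1 (t' 1) + j 2 (t' 2) = 1) ∨
      ((∀ u, t u ≤ t' u) ∧ j 0 (t' 0) + j 1 (t' 1) + j 2 (t' 2) = 2) := by
  obtain ⟨t', h⟩ := exists_le_sum_add_one_or_ge_sum_add_two (by simp) j hj t
  simp only [Fin.sum_univ_three, ht, zero_add] at h
  exact ⟨t', h⟩
end

section
/- The hypergraph $\operatorname{GS}_3(2)$ is not monotone: there do not exist linear orders $<^1, <^2, <^3$ on the three parts (each a copy of $\mathbb{F}_3^2$) such that the edge relation is monotone increasing in each coordinate with respect to these orders. -/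
/-! Comparing `![1,0]` and `![2,0]` in the first order, with the other two arguments fixed,
already fails: `(![1,0], 0, 0)` is an edge but `(![2,0], 0, 0)` is not, while
`(![2,0], 0, ![2,0])` is an edge but `(![1,0], 0, ![2,0])` is not. -/

/-- The edge relation of `GS₃(2)`: each part is `Fin 2 → ZMod 3`, and `(x,y,z)` is an
edge iff for the least `n` with `x n + y n + z n ≠ 0` one has `x n + y n + z n = 1`. -/
def GS32Edge (x y z : Fin 2 → ZMod 3) : Prop :=
  (x 0 + y 0 + z 0 = 1) ∨ (x 0 + y 0 + z 0 = 0 ∧ x 1 + y 1 + z 1 = 1)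

/-- `GS₃(2)` is not monotone: there are no linear orders on the three parts making the
edge relation monotone increasing in each coordinate. -/
theorem stmt_6 :
    ¬ ∃ (L₁ L₂ L₃ : LinearOrder (Fin 2 → ZMod 3)),
      ∀ x x' y y' z z' : Fin 2 → ZMod 3,
        L₁.le x x' → L₂.le y y' → L₃.le z z' → GS32Edge x y z → GS32Edge x' y' z' := by
  rintro ⟨L₁, L₂, L₃, hmono⟩
  have mono_first {x x' : Fin 2 → ZMod 3} (hx : L₁.le x x') (z : Fin 2 → ZMod 3) :
      GS32Edge x 0 z → GS32Edge x' 0 z :=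
    hmono x x' 0 0 z z hx (L₂.le_refl 0) (L₃.le_refl z)
  rcases L₁.le_total ![1, 0] ![2, 0] with h | h
  · exact absurd (mono_first h 0 (by unfold GS32Edge; decide)) (by unfold GS32Edge; decide)
  · exact absurd (mono_first h ![2, 0] (by unfold GS32Edge; decide)) (by unfold GS32Edge; decide)
end

section
/- Let $f : X \times Y \to [0,1]$ be given by $f(x,y) = \mu(P_x \cap Q_y)$ where $(\Omega,\mathcal{B},\mu)$ is a probability space and $P_x, Q_y \in \mathcal{B}$ for all $x \in X$, $y \in Y$. Then $f$ is stable: for every $\delta > 0$ there is $k \in \mathbb{N}$ (one may take $k > 1 + 1/\delta^2$ or any bound from Grothendieck's inequality) such that there are no sequences $x_1,\dots,x_k \in X$, $y_1,\dots,y_k \in Y$ and $\alpha \in [0,1]$ with $f(x_i,y_j) < \alpha$ whenever $i < j$ and $f(x_i,y_j) > \alpha + \delta$ whenever $j < i$. -/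
/-!
Write `f (x i) (y j) = ∫ pᵢ qⱼ dμ` with `pᵢ = 1_{P (x i)}` and `qⱼ = 1_{Q (y j)}`.
Hilbert's inequality `|∑ᵢ ∑ⱼ aᵢ bⱼ / (i - j)| ≤ π/2 (‖a‖² + ‖b‖²)`, applied pointwise on `Ω`,
bounds `∑ᵢ ∑ⱼ f (x i) (y j) / (i - j)` by `π k`. On a half-graph of height `k = 2h` with gap `δ`
the same sum is at least `δ ∑_{j < i} 1/(i - j) ≥ δ h log (h + 1)`, because the antisymmetric
kernel `1/(i - j)` sums to zero against the threshold `α`. Hence `log (h + 1) ≤ 2π/δ`.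
Hilbert's inequality itself follows from `∫₀^{2π} (π - θ) sin (m θ) dθ = 2π/m` and Parseval's
identity for trigonometric polynomials.
-/

open MeasureTheory Real Finset

lemma integral_cos_int_mul (d : ℤ) :
    ∫ θ in (0:ℝ)..2 * π, cos (d * θ) = if d = 0 then 2 * π else 0 := by
  split_ifs with hd
  · simp [hd]
  · have hd' : (d : ℝ) ≠ 0 := by exact_mod_cast hd
    rw [intervalIntegral.integral_comp_mul_left (fun t => cos t) hd', integral_cos,
      show (d : ℝ) * (2 * π) = ((2 * d : ℤ) : ℝ) * π by push_cast; ring, sin_int_mul_pi]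
    simp

lemma integral_pi_sub_mul_sin_int_mul (d : ℤ) :
    ∫ θ in (0:ℝ)..2 * π, (π - θ) * sin (d * θ) = 2 * π / d := by
  rcases eq_or_ne d 0 with rfl | hd
  · simp
  have hd' : (d : ℝ) ≠ 0 := by exact_mod_cast hd
  have hF : ∀ θ : ℝ, HasDerivAt (fun t => -((π - t) * cos (d * t)) / d - sin (d * t) / d ^ 2)
      ((π - θ) * sin (d * θ)) θ := by
    intro θ
    have hlin : HasDerivAt (fun t : ℝ => (d : ℝ) * t) d θ := hasDerivAt_const_mul _
    have hcos := (hasDerivAt_cos _).comp θ hlin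
    have hsin := (hasDerivAt_sin _).comp θ hlin
    refine ((((hasDerivAt_id θ).const_sub π).mul hcos).neg.div_const (d : ℝ) |>.sub
      (hsin.div_const ((d : ℝ) ^ 2))).congr_deriv ?_
    simp only [Function.comp_apply, id_eq]
    field_simp
    ring
  rw [intervalIntegral.integral_eq_sub_of_hasDerivAt (fun t _ => hF t)
    (by apply Continuous.intervalIntegrable; fun_prop)]
  have hsin : sin (d * (2 * π)) = 0 := by
    rw [show (d : ℝ) * (2 * π) = ((2 * d : ℤ) : ℝ) * π by push_cast; ring, sin_int_mul_pi]
  simp only [cos_int_mul_two_pi, hsin, mul_zero, cos_zero, sin_zero]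
  ring

section Hilbert

variable {ι : Type*} [Fintype ι]

lemma intervalIntegral_sum_sum_mul {a b : ℝ} (c : ι → ι → ℝ) (g : ι → ι → ℝ → ℝ)
    (hg : ∀ i j, Continuous (g i j)) :
    ∫ θ in a..b, ∑ i, ∑ j, c i j * g i j θ = ∑ i, ∑ j, c i j * ∫ θ in a..b, g i j θ := by
  have hint : ∀ i j, IntervalIntegrable (fun θ => c i j * g i j θ) volume a b := fun i j =>
    (continuous_const.mul (hg i j)).intervalIntegrable _ _
  rw [intervalIntegral.integral_finsetSum (f := fun i θ => ∑ j, c i j * g i j θ) fun i _ =>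
    (continuous_finsetSum _ fun j _ => continuous_const.mul (hg i j)).intervalIntegrable _ _]
  refine sum_congr rfl fun i _ => ?_
  rw [intervalIntegral.integral_finsetSum (f := fun j θ => c i j * g i j θ) fun j _ => hint i j]
  exact sum_congr rfl fun j _ => intervalIntegral.integral_const_mul _ _

noncomputable def sinSum (n : ι → ℤ) (x : ι → ℝ) (θ : ℝ) : ℝ := ∑ i, x i * sin (n i * θ)

noncomputable def cosSum (n : ι → ℤ) (x : ι → ℝ) (θ : ℝ) : ℝ := ∑ i, x i * cos (n i * θ)

variable (n : ι → ℤ)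

@[fun_prop]
lemma continuous_sinSum (x : ι → ℝ) : Continuous (sinSum n x) := by
  unfold sinSum; fun_prop

@[fun_prop]
lemma continuous_cosSum (x : ι → ℝ) : Continuous (cosSum n x) := by
  unfold cosSum; fun_prop

lemma sinSum_sq_add_cosSum_sq (x : ι → ℝ) (θ : ℝ) :
    sinSum n x θ ^ 2 + cosSum n x θ ^ 2 =
      ∑ i, ∑ j, x i * x j * cos (((n i - n j : ℤ) : ℝ) * θ) := by
  simp only [sinSum, cosSum, sq, sum_mul_sum, ← sum_add_distrib]
  refine sum_congr rfl fun i _ => sum_congr rfl fun j _ => ?_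
  push_cast
  rw [sub_mul, cos_sub]
  ring

lemma sinSum_mul_cosSum_sub_cosSum_mul_sinSum (x y : ι → ℝ) (θ : ℝ) :
    sinSum n x θ * cosSum n y θ - cosSum n x θ * sinSum n y θ =
      ∑ i, ∑ j, x i * y j * sin (((n i - n j : ℤ) : ℝ) * θ) := by
  simp only [sinSum, cosSum, sum_mul_sum, ← sum_sub_distrib]
  refine sum_congr rfl fun i _ => sum_congr rfl fun j _ => ?_
  push_cast
  rw [sub_mul, sin_sub]
  ring

lemma integral_sinSum_sq_add_cosSum_sq (hn : Function.Injective n) (x : ι → ℝ) :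
    ∫ θ in (0:ℝ)..2 * π, sinSum n x θ ^ 2 + cosSum n x θ ^ 2 = 2 * π * ∑ i, x i ^ 2 := by
  simp only [sinSum_sq_add_cosSum_sq, intervalIntegral_sum_sum_mul _ _
    (fun i j => by fun_prop : ∀ i j, Continuous fun θ => cos (((n i - n j : ℤ) : ℝ) * θ)),
    mul_sum]
  refine sum_congr rfl fun i _ => ?_
  rw [sum_eq_single i (fun j _ hji => by
      rw [integral_cos_int_mul, if_neg (sub_ne_zero.mpr (hn.ne hji.symm)), mul_zero])
    (by simp)]
  simp only [sub_self, integral_cos_int_mul, if_true]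
  ring

lemma integral_pi_sub_mul_sinSum_mul_cosSum_sub (x y : ι → ℝ) :
    ∫ θ in (0:ℝ)..2 * π, (π - θ) * (sinSum n x θ * cosSum n y θ - cosSum n x θ * sinSum n y θ) =
      2 * π * ∑ i, ∑ j, x i * y j / (n i - n j) := by
  simp only [sinSum_mul_cosSum_sub_cosSum_mul_sinSum, mul_sum, mul_left_comm (π - _)]
  rw [intervalIntegral_sum_sum_mul _ _ (fun i j => by fun_prop)]
  simp only [integral_pi_sub_mul_sin_int_mul]
  refine sum_congr rfl fun i _ => sum_congr rfl fun j _ => ?_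
  push_cast
  ring

/-- Hilbert's inequality; the diagonal terms are `0` because `x / 0 = 0`. -/
theorem abs_sum_sum_div_sub_le (hn : Function.Injective n) (x y : ι → ℝ) :
    |∑ i, ∑ j, x i * y j / (n i - n j)| ≤ π / 2 * (∑ i, x i ^ 2 + ∑ j, y j ^ 2) := by
  have h2π : (0 : ℝ) < 2 * π := by positivity
  have hpoint : ∀ θ ∈ Set.Icc 0 (2 * π),
      |(π - θ) * (sinSum n x θ * cosSum n y θ - cosSum n x θ * sinSum n y θ)| ≤
        π / 2 * ((sinSum n x θ ^ 2 + cosSum n x θ ^ 2) + (sinSum n y θ ^ 2 + cosSum n y θ ^ 2)) := by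
    intro θ ⟨hθ₀, hθ₁⟩
    have hπθ : |π - θ| ≤ π := abs_le.mpr ⟨by linarith, by linarith⟩
    have hquad : ∀ a b c d : ℝ, |a * d - b * c| ≤ ((a ^ 2 + b ^ 2) + (c ^ 2 + d ^ 2)) / 2 :=
      fun a b c d => abs_le.mpr ⟨by nlinarith [sq_nonneg (a + d), sq_nonneg (b - c)],
        by nlinarith [sq_nonneg (a - d), sq_nonneg (b + c)]⟩
    rw [abs_mul]
    calc _ ≤ π * (((sinSum n x θ ^ 2 + cosSum n x θ ^ 2) +
          (sinSum n y θ ^ 2 + cosSum n y θ ^ 2)) / 2) :=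
          mul_le_mul hπθ (hquad _ _ _ _) (abs_nonneg _) pi_pos.le
      _ = _ := by ring
  have key : 2 * π * |∑ i, ∑ j, x i * y j / (n i - n j)| ≤
      2 * π * (π / 2 * (∑ i, x i ^ 2 + ∑ j, y j ^ 2)) :=
    calc 2 * π * |∑ i, ∑ j, x i * y j / (n i - n j)|
        = |∫ θ in (0:ℝ)..2 * π, (π - θ) *
            (sinSum n x θ * cosSum n y θ - cosSum n x θ * sinSum n y θ)| := by
          rw [integral_pi_sub_mul_sinSum_mul_cosSum_sub, abs_mul, abs_of_pos h2π]
      _ ≤ ∫ θ in (0:ℝ)..2 * π, |(π - θ) *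
            (sinSum n x θ * cosSum n y θ - cosSum n x θ * sinSum n y θ)| :=
          intervalIntegral.abs_integral_le_integral_abs h2π.le
      _ ≤ ∫ θ in (0:ℝ)..2 * π, π / 2 *
            ((sinSum n x θ ^ 2 + cosSum n x θ ^ 2) + (sinSum n y θ ^ 2 + cosSum n y θ ^ 2)) :=
          intervalIntegral.integral_mono_on h2π.le (by apply Continuous.intervalIntegrable; fun_prop)
            (by apply Continuous.intervalIntegrable; fun_prop) hpoint
      _ = 2 * π * (π / 2 * (∑ i, x i ^ 2 + ∑ j, y j ^ 2)) := by
          rw [intervalIntegral.integral_const_mul, intervalIntegral.integral_add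
            (by apply Continuous.intervalIntegrable; fun_prop)
            (by apply Continuous.intervalIntegrable; fun_prop),
            integral_sinSum_sq_add_cosSum_sq n hn, integral_sinSum_sq_add_cosSum_sq n hn]
          ring
  exact le_of_mul_le_mul_left key h2π

end Hilbert

lemma sum_indicator_one_sq_le {ι Ω : Type*} [Fintype ι] (s : ι → Set Ω) (ω : Ω) :
    ∑ i, (s i).indicator (1 : Ω → ℝ) ω ^ 2 ≤ Fintype.card ι := by
  have h : ∀ i ∈ univ, (s i).indicator (1 : Ω → ℝ) ω ^ 2 ≤ 1 := fun i _ => by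
    by_cases hω : ω ∈ s i <;> simp [hω]
  simpa using sum_le_card_nsmul univ _ 1 h

theorem abs_sum_sum_measureReal_inter_div_sub_le {ι Ω : Type*} [Fintype ι] [MeasurableSpace Ω]
    (μ : Measure Ω) [IsFiniteMeasure μ] {n : ι → ℤ} (hn : Function.Injective n)
    {P Q : ι → Set Ω} (hP : ∀ i, MeasurableSet (P i)) (hQ : ∀ j, MeasurableSet (Q j)) :
    |∑ i, ∑ j, μ.real (P i ∩ Q j) / (n i - n j)| ≤ π * Fintype.card ι * μ.real Set.univ := by
  have hmul : ∀ i j ω, (P i).indicator (1 : Ω → ℝ) ω * (Q j).indicator 1 ω =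
      (P i ∩ Q j).indicator 1 ω := fun i j ω => by
    rw [Set.inter_indicator_one, Pi.mul_apply]
  have hint : ∀ i j, Integrable (fun ω => (P i).indicator (1 : Ω → ℝ) ω *
      (Q j).indicator 1 ω / (n i - n j)) μ := fun i j => by
    simp only [hmul]
    exact ((integrable_const (1 : ℝ)).indicator ((hP i).inter (hQ j))).div_const _
  have hrepr : ∑ i, ∑ j, μ.real (P i ∩ Q j) / (n i - n j) =
      ∫ ω, ∑ i, ∑ j, (P i).indicator (1 : Ω → ℝ) ω * (Q j).indicator 1 ω / (n i - n j) ∂μ := by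
    rw [integral_finsetSum _ fun i _ => integrable_finsetSum _ fun j _ => hint i j]
    refine sum_congr rfl fun i _ => ?_
    rw [integral_finsetSum _ fun j _ => hint i j]
    refine sum_congr rfl fun j _ => ?_
    rw [integral_div]
    simp only [hmul, integral_indicator_one ((hP i).inter (hQ j))]
  rw [hrepr, ← Real.norm_eq_abs]
  refine norm_integral_le_of_norm_le_const (Filter.Eventually.of_forall fun ω => ?_)
  calc _ ≤ π / 2 * (∑ i, (P i).indicator (1 : Ω → ℝ) ω ^ 2 + ∑ j, (Q j).indicator 1 ω ^ 2) := by
        simpa only [mul_div_assoc, Real.norm_eq_abs] using abs_sum_sum_div_sub_le n hn _ _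
    _ ≤ π / 2 * (Fintype.card ι + Fintype.card ι) := by
        gcongr <;> exact sum_indicator_one_sq_le _ ω
    _ = π * Fintype.card ι := by ring

theorem mul_sum_inv_sub_le_sum_div_sub_of_halfGraph {ι : Type*} [Fintype ι] [LinearOrder ι]
    {n : ι → ℝ} (hn : StrictMono n) {M : ι → ι → ℝ} {α δ : ℝ}
    (hlt : ∀ i j, i < j → M i j < α) (hgt : ∀ i j, j < i → α + δ < M i j) :
    δ * ∑ i, ∑ j, (if j < i then (n i - n j)⁻¹ else 0) ≤ ∑ i, ∑ j, M i j / (n i - n j) := by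
  have hα : ∑ i, ∑ j, α / (n i - n j) = 0 := by
    have hanti : ∑ i, ∑ j, α / (n i - n j) = -∑ i, ∑ j, α / (n i - n j) := by
      conv_lhs => rw [sum_comm]
      rw [← sum_neg_distrib]
      refine sum_congr rfl fun i _ => ?_
      rw [← sum_neg_distrib]
      exact sum_congr rfl fun j _ => by rw [← div_neg, neg_sub]
    linarith
  calc δ * ∑ i, ∑ j, (if j < i then (n i - n j)⁻¹ else 0)
      = ∑ i, ∑ j, (if j < i then δ / (n i - n j) else 0) := by
        simp only [mul_sum, mul_ite, mul_zero, div_eq_mul_inv]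
    _ ≤ ∑ i, ∑ j, (M i j - α) / (n i - n j) := by
        refine sum_le_sum fun i _ => sum_le_sum fun j _ => ?_
        rcases lt_trichotomy j i with hji | rfl | hij
        · rw [if_pos hji]
          exact div_le_div_of_nonneg_right (by linarith [hgt i j hji]) (sub_pos.mpr (hn hji)).le
        · simp
        · rw [if_neg hij.not_gt]
          exact div_nonneg_of_nonpos (by linarith [hlt i j hij]) (sub_nonpos.mpr (hn hij).le)
    _ = ∑ i, ∑ j, M i j / (n i - n j) := by
        simp only [sub_div, sum_sub_distrib, hα, sub_zero]

lemma sum_range_inv_sub_eq_harmonic (i : ℕ) : ∑ t ∈ range i, ((i : ℝ) - t)⁻¹ = harmonic i := by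
  induction i with
  | zero => simp
  | succ i ih =>
    rw [sum_range_succ', harmonic_succ]
    push_cast
    simp only [add_sub_add_right_eq_sub, ih, sub_zero]

lemma harmonic_mono : Monotone harmonic :=
  monotone_nat_of_le_succ fun n => by
    rw [harmonic_succ]
    exact le_add_of_nonneg_right (by positivity)

lemma mul_log_le_sum_sum_inv_sub (h : ℕ) :
    h * log (h + 1) ≤ ∑ i : Fin (2 * h), ∑ j : Fin (2 * h), if j < i then ((i : ℝ) - j)⁻¹ else 0 := by
  have hrow : ∀ i : Fin (2 * h),
      ∑ j : Fin (2 * h), (if j < i then ((i : ℝ) - j)⁻¹ else 0) = harmonic i := by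
    intro i
    simp only [Fin.lt_def]
    rw [Fin.sum_univ_eq_sum_range (fun t => if t < (i : ℕ) then ((i : ℝ) - t)⁻¹ else 0),
      ← sum_filter, ← sum_range_inv_sub_eq_harmonic]
    congr 1
    ext t
    simp only [mem_filter, mem_range]
    omega
  simp only [hrow]
  rw [Fin.sum_univ_eq_sum_range (fun i => (harmonic i : ℝ))]
  calc (h : ℝ) * log (h + 1) ≤ (Ico h (2 * h)).card • (harmonic h : ℝ) := by
        rw [Nat.card_Ico, nsmul_eq_mul, show 2 * h - h = h by omega]
        exact mul_le_mul_of_nonneg_left (by exact_mod_cast log_add_one_le_harmonic h) (by positivity)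
    _ ≤ ∑ i ∈ Ico h (2 * h), (harmonic i : ℝ) :=
        card_nsmul_le_sum _ _ _ fun i hi => by exact_mod_cast harmonic_mono (mem_Ico.mp hi).1
    _ ≤ ∑ i ∈ range (2 * h), (harmonic i : ℝ) :=
        sum_le_sum_of_subset_of_nonneg (fun i hi => mem_range.mpr (mem_Ico.mp hi).2)
          fun i _ _ => by exact_mod_cast (harmonic_mono (Nat.zero_le i)).trans' harmonic_zero.ge

/-- The function `f(x,y) = μ(Pₓ ∩ Q_y)` is stable: for every `δ > 0` there is `k` such
that no half-graph of height `k` with gap `δ` embeds into `f`. -/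
theorem stmt_11 {Ω X Y : Type*} [MeasurableSpace Ω] (μ : Measure Ω) [IsProbabilityMeasure μ]
    (P : X → Set Ω) (Q : Y → Set Ω)
    (hP : ∀ x, MeasurableSet (P x)) (hQ : ∀ y, MeasurableSet (Q y))
    (f : X → Y → ℝ) (hf : ∀ x y, f x y = (μ (P x ∩ Q y)).toReal) :
    ∀ δ : ℝ, 0 < δ → ∃ k : ℕ,
      ¬ ∃ (x : Fin k → X) (y : Fin k → Y) (α : ℝ), α ∈ Set.Icc (0:ℝ) 1 ∧
        (∀ i j : Fin k, i < j → f (x i) (y j) < α) ∧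
        (∀ i j : Fin k, j < i → f (x i) (y j) > α + δ) := by
  intro δ hδ
  obtain ⟨h, hh⟩ := exists_nat_ge (exp (2 * π / δ))
  refine ⟨2 * h, ?_⟩
  rintro ⟨x, y, α, -, hlt, hgt⟩
  have hupper := abs_sum_sum_measureReal_inter_div_sub_le μ (n := fun i : Fin (2 * h) => (i : ℤ))
    (fun a b hab => Fin.ext (by simpa using hab)) (fun i => hP (x i)) (fun j => hQ (y j))
  have hlower := mul_sum_inv_sub_le_sum_div_sub_of_halfGraph
    (n := fun i : Fin (2 * h) => (i : ℝ)) (fun a b hab => by simpa using hab) hlt hgt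
  simp only [hf, ← measureReal_def, Int.cast_natCast, probReal_univ,
    Fintype.card_fin] at hupper hlower
  have hh₀ : (0 : ℝ) < h := (exp_pos _).trans_le hh
  have hlog : log (h + 1) ≤ 2 * π / δ := by
    rw [le_div_iff₀ hδ]
    refine le_of_mul_le_mul_left ?_ hh₀
    calc (h : ℝ) * (log (h + 1) * δ) = δ * (h * log (h + 1)) := by ring
      _ ≤ δ * ∑ i : Fin (2 * h), ∑ j : Fin (2 * h), if j < i then ((i : ℝ) - j)⁻¹ else 0 :=
        mul_le_mul_of_nonneg_left (mul_log_le_sum_sum_inv_sub h) hδ.le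
      _ ≤ π * (2 * h : ℕ) * 1 := hlower.trans (le_abs_self _ |>.trans hupper)
      _ = h * (2 * π) := by push_cast; ring
  have hbig : 2 * π / δ < log (h + 1) := by
    rw [← log_exp (2 * π / δ)]
    exact log_lt_log (exp_pos _) (by linarith)
  linarith
end
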